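/- For a symmetric second-order method with operator Y(h) = hF + h³Y₃ + O(h⁵), the truncated products X_k(h) = ∏_{i=1}^{k} exp(Y(hα_i)), expanded to order h⁴ in the graded algebra generated by F and Y₃, have coefficients: the h-coefficient of X_k is g_k F; the h²-coefficient is (g_k²/2)F²; the h³-coefficient is (g_k³/6)F³ + (∑_{j≤k} α_j³)Y₃; and the h⁴-coefficient of the F·Y₃ term is ½(∑_{j≤k} α_j⁴ + 2∑_{j<ℓ≤k} α_j³α_ℓ), where g_k = ∑_{j=1}^{k} α_j. -/
import Mathlib

set_option linter.unnecessarySeqFocus false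


/-- Cauchy product (convolution) of coefficient sequences of formal power series. -/
def seriesConv {A : Type*} [Ring A] (p q : ℕ → A) : ℕ → A :=
  fun n => ∑ i ∈ Finset.range (n + 1), p i * q (n - i)

/-- Coefficients (up to order `h⁴`) of `exp(Y(hα)) = exp(hαF + h³α³Y₃)`,
the operator of a symmetric second-order method with step fraction `α`. -/
noncomputable def expSymm2 {A : Type*} [Ring A] [Algebra ℝ A] (F Y3 : A) (a : ℝ) : ℕ → A :=
  fun n =>
    if n = 0 then 1
    else if n = 1 then a • F
    else if n = 2 then (a ^ 2 / 2) • (F * F)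
    else if n = 3 then (a ^ 3 / 6) • (F * F * F) + a ^ 3 • Y3
    else if n = 4 then
      (a ^ 4 / 24) • (F * F * F * F) + (a ^ 4 / 2) • (F * Y3) + (a ^ 4 / 2) • (Y3 * F)
    else 0

/-- Coefficients of the truncated product `X_k(h) = ∏_{i=1}^{k} exp(Y(hα_i))`
(in operator order, factor `i = k` leftmost). -/
noncomputable def truncProd {A : Type*} [Ring A] [Algebra ℝ A] (F Y3 : A) (α : ℕ → ℝ) :
    ℕ → ℕ → A
  | 0 => fun n => if n = 0 then 1 else 0
  | k + 1 => seriesConv (expSymm2 F Y3 (α (k + 1))) (truncProd F Y3 α k)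

private lemma sum_Icc_top (α : ℕ → ℝ) (k : ℕ) (f : ℝ → ℝ) :
    ∑ j ∈ Finset.Icc 1 (k + 1), f (α j)
      = (∑ j ∈ Finset.Icc 1 k, f (α j)) + f (α (k + 1)) := by
  rw [Finset.sum_Icc_succ_top (by omega : 1 ≤ k + 1)]

private lemma double_sum_aux (α : ℕ → ℝ) (k : ℕ) :
    ∑ j ∈ Finset.Icc 1 (k + 1), α j ^ 3 * ∑ l ∈ Finset.Icc (j + 1) (k + 1), α l
      = (∑ j ∈ Finset.Icc 1 k, α j ^ 3 * ∑ l ∈ Finset.Icc (j + 1) k, α l)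
        + α (k + 1) * ∑ j ∈ Finset.Icc 1 k, α j ^ 3 := by
  rw [Finset.sum_Icc_succ_top (by omega : 1 ≤ k + 1)]
  rw [show Finset.Icc (k + 1 + 1) (k + 1) = ∅ from Finset.Icc_eq_empty (by omega)]
  simp only [Finset.sum_empty, mul_zero, add_zero]
  rw [Finset.mul_sum]
  rw [← Finset.sum_add_distrib]
  apply Finset.sum_congr rfl
  intro j hj
  have hjk : j ≤ k := (Finset.mem_Icc.mp hj).2
  rw [Finset.sum_Icc_succ_top (by omega : j + 1 ≤ k + 1)]
  ring

private lemma truncProd_zero {A : Type*} [Ring A] [Algebra ℝ A] (F Y3 : A) (α : ℕ → ℝ)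
    (k : ℕ) : truncProd F Y3 α k 0 = 1 := by
  induction k with
  | zero => simp [truncProd]
  | succ k ih => simp [truncProd, seriesConv, expSymm2, ih]

/-- Expansion to order `h⁴` of `X_k(h) = ∏_{i=1}^{k} exp(Y(hα_i))` for a
symmetric second-order method: the `h`-coefficient is `g_k F`, the
`h²`-coefficient is `(g_k²/2)F²`, the `h³`-coefficient is
`(g_k³/6)F³ + (∑_{j≤k} αⱼ³)Y₃`, and the `F·Y₃`-part of the `h⁴`-coefficient is
`½(∑_{j≤k} αⱼ⁴ + 2∑_{j<ℓ≤k} αⱼ³α_ℓ)`, where `g_k = ∑_{j=1}^{k} αⱼ`. -/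
theorem truncated_product_expansion
    {A : Type*} [Ring A] [Algebra ℝ A] (F Y3 : A) (α : ℕ → ℝ) (k : ℕ) :
    truncProd F Y3 α k 1 = (∑ j ∈ Finset.Icc 1 k, α j) • F ∧
    truncProd F Y3 α k 2 = ((∑ j ∈ Finset.Icc 1 k, α j) ^ 2 / 2) • (F * F) ∧
    truncProd F Y3 α k 3 =
      ((∑ j ∈ Finset.Icc 1 k, α j) ^ 3 / 6) • (F * F * F) +
        (∑ j ∈ Finset.Icc 1 k, α j ^ 3) • Y3 ∧
    ∃ c : ℝ,
      truncProd F Y3 α k 4 =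
        ((∑ j ∈ Finset.Icc 1 k, α j) ^ 4 / 24) • (F * F * F * F) +
          ((1 / 2) * ((∑ j ∈ Finset.Icc 1 k, α j ^ 4) +
            2 * ∑ j ∈ Finset.Icc 1 k, α j ^ 3 * ∑ l ∈ Finset.Icc (j + 1) k, α l)) •
            (F * Y3) +
          c • (Y3 * F) := by
  induction k with
  | zero =>
    refine ⟨by simp [truncProd], by simp [truncProd], by simp [truncProd], 0, by simp [truncProd]⟩
  | succ k ih =>
    obtain ⟨h1, h2, h3, c, h4⟩ := ih
    set a := α (k + 1) with ha
    have hconv : ∀ n : ℕ, truncProd F Y3 α (k + 1) n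
        = seriesConv (expSymm2 F Y3 a) (truncProd F Y3 α k) n := fun n => rfl
    have e1 : ∑ j ∈ Finset.Icc 1 (k + 1), α j = (∑ j ∈ Finset.Icc 1 k, α j) + a :=
      sum_Icc_top α k id
    have e3 : ∑ j ∈ Finset.Icc 1 (k + 1), α j ^ 3
        = (∑ j ∈ Finset.Icc 1 k, α j ^ 3) + a ^ 3 := sum_Icc_top α k (· ^ 3)
    have e4 : ∑ j ∈ Finset.Icc 1 (k + 1), α j ^ 4
        = (∑ j ∈ Finset.Icc 1 k, α j ^ 4) + a ^ 4 := sum_Icc_top α k (· ^ 4)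
    have e5 := double_sum_aux α k
    have h0 := truncProd_zero F Y3 α k
    refine ⟨?_, ?_, ?_, c + a ^ 3 * (∑ j ∈ Finset.Icc 1 k, α j) + a ^ 4 / 2, ?_⟩
    · rw [hconv]
      simp only [seriesConv, Finset.sum_range_succ, Finset.sum_range_zero]
      norm_num [expSymm2, h0, h1, e1]
      match_scalars <;> ring
    · rw [hconv]
      simp only [seriesConv, Finset.sum_range_succ, Finset.sum_range_zero]
      norm_num [expSymm2, h0, h1, h2, e1]
      simp only [smul_mul_assoc, mul_smul_comm, smul_smul]
      match_scalars <;> ring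
    · rw [hconv]
      simp only [seriesConv, Finset.sum_range_succ, Finset.sum_range_zero]
      norm_num [expSymm2, h0, h1, h2, h3, e1, e3]
      simp only [add_mul, mul_add, smul_mul_assoc, mul_smul_comm, smul_smul, mul_assoc]
      match_scalars <;> ring
    · rw [hconv]
      simp only [seriesConv, Finset.sum_range_succ, Finset.sum_range_zero]
      norm_num [expSymm2, h0, h1, h2, h3, h4, e1, e3, e4, e5]
      simp only [add_mul, mul_add, smul_mul_assoc, mul_smul_comm, smul_smul, mul_assoc]
      match_scalars <;> ring
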